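/- arXiv:0810.1969 — 2 statements merged into one kernel-verified Lean document; each statement's English description precedes it below -/
import Mathlib

section
/- Let X be a δ-hyperbolic geodesic metric space and ρ ≥ δ₀ (the constant guaranteeing existence of centroids). There is a constant L depending only on δ and ρ such that the map assigning to each triple (a₁,a₂,a₃) the (nonempty) set of its ρ-centroids is L-coarse-Lipschitz with respect to the Hausdorff metric: if d(aᵢ, aᵢ') ≤ 1 for each i, then the Hausdorff distance between the centroid sets of (a₁,a₂,a₃) and (a₁',a₂',a₃') is at most L. -/
open Metric Set

/-- A geodesic parametrization from `a` to `b`. -/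
def IsGeodesicParam {X : Type*} [MetricSpace X] (f : ℝ → X) (a b : X) : Prop :=
  f 0 = a ∧ f (dist a b) = b ∧
    ∀ u ∈ Set.Icc (0:ℝ) (dist a b), ∀ v ∈ Set.Icc (0:ℝ) (dist a b),
      dist (f u) (f v) = |u - v|

/-- `s` is a geodesic segment from `a` to `b`. -/
def IsGeodesicSegment {X : Type*} [MetricSpace X] (s : Set X) (a b : X) : Prop :=
  ∃ f : ℝ → X, IsGeodesicParam f a b ∧ s = f '' Set.Icc 0 (dist a b)

/-- A geodesic metric space: any two points are joined by a geodesic segment. -/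
def GeodesicSpace' (X : Type*) [MetricSpace X] : Prop :=
  ∀ a b : X, ∃ s : Set X, IsGeodesicSegment s a b

/-- Rips (thin triangles) hyperbolicity: every side of every geodesic triangle lies in the
`δ`-neighborhood of the union of the other two sides. -/
def RipsHyperbolic (X : Type*) [MetricSpace X] (δ : ℝ) : Prop :=
  ∀ a b c : X, ∀ sab sbc sac : Set X,
    IsGeodesicSegment sab a b → IsGeodesicSegment sbc b c → IsGeodesicSegment sac a c →
    (∀ p ∈ sab, Metric.infDist p (sbc ∪ sac) ≤ δ) ∧
    (∀ p ∈ sbc, Metric.infDist p (sab ∪ sac) ≤ δ) ∧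
    (∀ p ∈ sac, Metric.infDist p (sab ∪ sbc) ≤ δ)


/-- `x` is a ρ-centroid of the triple `(a,b,c)`: it lies within ρ of each of three geodesic
sides of a triangle with these vertices. -/
def IsCentroid {X : Type*} [MetricSpace X] (ρ : ℝ) (a b c x : X) : Prop :=
  ∃ s₁ s₂ s₃ : Set X, IsGeodesicSegment s₁ a b ∧ IsGeodesicSegment s₂ b c ∧
    IsGeodesicSegment s₃ a c ∧
    Metric.infDist x s₁ ≤ ρ ∧ Metric.infDist x s₂ ≤ ρ ∧ Metric.infDist x s₃ ≤ ρ

/-- The set of all ρ-centroids of a triple. -/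
def centroidSet {X : Type*} [MetricSpace X] (ρ : ℝ) (a b c : X) : Set X :=
  {x | IsCentroid ρ a b c x}

/-! A `ρ`-centroid of a triangle lies, up to `O(ρ)`, at distance `(b·c)_a` from the vertex `a`
(Gromov product), so any two centroids of the same triangle are `O(ρ)` apart. By thin
triangles, moving the endpoints of a geodesic by `ε₁, ε₂` moves it by at most
`2δ + ε₁ + ε₂`, so a `ρ`-centroid of a triangle is a `(ρ + 2δ + 2)`-centroid of a nearby
triangle. Centroids exist for `ρ ≥ δ`: by the intermediate value theorem some point of one side
is equally far from the other two, and thinness bounds that common distance by `δ`. -/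

namespace Metric

variable {α : Type*} [PseudoMetricSpace α]

theorem infDist_le_infDist_add_of_forall_infDist_le {s t : Set α} {e : ℝ} (x : α)
    (hs : s.Nonempty) (h : ∀ y ∈ s, infDist y t ≤ e) : infDist x t ≤ infDist x s + e := by
  refine le_of_forall_pos_le_add fun ε hε => ?_
  obtain ⟨y, hy, hxy⟩ := (infDist_lt_iff hs).mp (lt_add_of_pos_right (infDist x s) hε)
  linarith [infDist_le_infDist_add_dist (x := x) (y := y) (s := t), h y hy]

theorem infDist_union_of_nonempty {s t : Set α} (x : α) (hs : s.Nonempty) (ht : t.Nonempty) :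
    infDist x (s ∪ t) = min (infDist x s) (infDist x t) := by
  simp only [infDist, infEDist_union]
  exact ENNReal.toReal_min (infEDist_ne_top hs) (infEDist_ne_top ht)

theorem hausdorffDist_le_of_forall_dist_le {s t : Set α} {r : ℝ} (hs : s.Nonempty)
    (ht : t.Nonempty) (h : ∀ x ∈ s, ∀ y ∈ t, dist x y ≤ r) : hausdorffDist s t ≤ r := by
  obtain ⟨x₀, hx₀⟩ := hs
  obtain ⟨y₀, hy₀⟩ := ht
  refine hausdorffDist_le_of_mem_dist (dist_nonneg.trans (h x₀ hx₀ y₀ hy₀))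
    (fun x hx => ⟨y₀, hy₀, h x hx y₀ hy₀⟩) (fun y hy => ⟨x₀, hx₀, ?_⟩)
  rw [dist_comm]
  exact h x₀ hx₀ y hy

end Metric

variable {X : Type*} [MetricSpace X]

theorem IsGeodesicParam.lipschitzOnWith {f : ℝ → X} {a b : X} (hf : IsGeodesicParam f a b) :
    LipschitzOnWith 1 f (Icc 0 (dist a b)) :=
  LipschitzOnWith.of_dist_le_mul fun u hu v hv => by
    rw [hf.2.2 u hu v hv, NNReal.coe_one, one_mul, Real.dist_eq]

namespace IsGeodesicSegment

variable {s : Set X} {a b : X}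

theorem left_mem (hs : IsGeodesicSegment s a b) : a ∈ s := by
  obtain ⟨f, ⟨hf₀, -, -⟩, rfl⟩ := hs
  exact ⟨0, left_mem_Icc.2 dist_nonneg, hf₀⟩

theorem right_mem (hs : IsGeodesicSegment s a b) : b ∈ s := by
  obtain ⟨f, ⟨-, hf₁, -⟩, rfl⟩ := hs
  exact ⟨dist a b, right_mem_Icc.2 dist_nonneg, hf₁⟩

theorem nonempty (hs : IsGeodesicSegment s a b) : s.Nonempty :=
  ⟨a, hs.left_mem⟩

theorem isCompact (hs : IsGeodesicSegment s a b) : IsCompact s := by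
  obtain ⟨f, hf, rfl⟩ := hs
  exact isCompact_Icc.image_of_continuousOn hf.lipschitzOnWith.continuousOn

theorem isPreconnected (hs : IsGeodesicSegment s a b) : IsPreconnected s := by
  obtain ⟨f, hf, rfl⟩ := hs
  exact isPreconnected_Icc.image f hf.lipschitzOnWith.continuousOn

theorem dist_add_dist_of_mem (hs : IsGeodesicSegment s a b) {p : X} (hp : p ∈ s) :
    dist p a + dist p b = dist a b := by
  obtain ⟨f, ⟨hf₀, hf₁, hf⟩, rfl⟩ := hs
  obtain ⟨u, hu, rfl⟩ := hp
  have hua : dist (f u) a = u := by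
    rw [← hf₀, hf u hu 0 (left_mem_Icc.2 dist_nonneg), sub_zero, abs_of_nonneg hu.1]
  have hub : dist (f u) b = dist a b - u := by
    have h := hf u hu _ (right_mem_Icc.2 dist_nonneg)
    rw [hf₁] at h
    rw [h, abs_of_nonpos (by linarith [hu.2])]
    ring
  rw [hua, hub]
  ring

theorem dist_eq_abs_sub (hs : IsGeodesicSegment s a b) {p q : X} (hp : p ∈ s) (hq : q ∈ s) :
    dist p q = |dist p a - dist q a| := by
  obtain ⟨f, ⟨hf₀, -, hf⟩, rfl⟩ := hs
  obtain ⟨u, hu, rfl⟩ := hp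
  obtain ⟨v, hv, rfl⟩ := hq
  have h₀ : (0 : ℝ) ∈ Icc 0 (dist a b) := left_mem_Icc.2 dist_nonneg
  rw [← hf₀, hf u hu v hv, hf u hu 0 h₀, hf v hv 0 h₀, sub_zero, sub_zero,
    abs_of_nonneg hu.1, abs_of_nonneg hv.1]

theorem exists_mem_dist_le (hs : IsGeodesicSegment s a b) {x : X} {R : ℝ}
    (hx : infDist x s ≤ R) : ∃ p ∈ s, dist x p ≤ R := by
  obtain ⟨p, hp, hxp⟩ := hs.isCompact.exists_infDist_eq_dist hs.nonempty x
  exact ⟨p, hp, hxp ▸ hx⟩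

theorem dist_add_dist_le (hs : IsGeodesicSegment s a b) {x : X} {R : ℝ}
    (hx : infDist x s ≤ R) : dist x a + dist x b ≤ dist a b + 2 * R := by
  obtain ⟨p, hp, hxp⟩ := hs.exists_mem_dist_le hx
  linarith [hs.dist_add_dist_of_mem hp, dist_triangle x p a, dist_triangle x p b]

theorem infDist_le_dist {t : Set X} {x : X} (hs : IsGeodesicSegment s a b) (hb : b ∈ t)
    (hx : x ∈ s) : infDist x t ≤ dist a b := by
  have := hs.dist_add_dist_of_mem hx
  linarith [infDist_le_dist_of_mem (x := x) hb, dist_nonneg (x := x) (y := a)]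

theorem infDist_le_infDist_union_add {t : Set X} (hs : IsGeodesicSegment s a b) (hb : b ∈ t)
    (x : X) : infDist x t ≤ infDist x (s ∪ t) + dist a b := by
  refine infDist_le_infDist_add_of_forall_infDist_le x ⟨b, Or.inr hb⟩ ?_
  rintro y (hy | hy)
  · exact hs.infDist_le_dist hb hy
  · rw [infDist_zero_of_mem hy]
    exact dist_nonneg

end IsGeodesicSegment

namespace RipsHyperbolic

variable {δ : ℝ}

theorem mono {δ' : ℝ} (hyp : RipsHyperbolic X δ) (hδ : δ ≤ δ') : RipsHyperbolic X δ' := by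
  intro a b c s₁ s₂ s₃ h₁ h₂ h₃
  obtain ⟨thin₁, thin₂, thin₃⟩ := hyp a b c s₁ s₂ s₃ h₁ h₂ h₃
  exact ⟨fun p hp => (thin₁ p hp).trans hδ, fun p hp => (thin₂ p hp).trans hδ,
    fun p hp => (thin₃ p hp).trans hδ⟩

/-- Compare both geodesics with one from `a` to `b'`, through one thin triangle each. -/
theorem infDist_le_of_mem (geo : GeodesicSpace' X) (hyp : RipsHyperbolic X δ)
    {a b a' b' p : X} {s s' : Set X} (hs : IsGeodesicSegment s a b)
    (hs' : IsGeodesicSegment s' a' b') (hp : p ∈ s) :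
    infDist p s' ≤ 2 * δ + dist a a' + dist b b' := by
  obtain ⟨t, ht⟩ := geo a b'
  obtain ⟨sa, hsa⟩ := geo a a'
  obtain ⟨sb, hsb⟩ := geo b b'
  have hpt : infDist p t ≤ δ + dist b b' :=
    (hsb.infDist_le_infDist_union_add ht.right_mem p).trans
      (add_le_add_left ((hyp a b b' s sb t hs hsb ht).1 p hp) _)
  have hts' : ∀ q ∈ t, infDist q s' ≤ δ + dist a a' := fun q hq =>
    (hsa.infDist_le_infDist_union_add hs'.left_mem q).trans
      (add_le_add_left ((hyp a a' b' sa s' t hsa hs' ht).2.2 q hq) _)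
  linarith [infDist_le_infDist_add_of_forall_infDist_le p ht.nonempty hts']

theorem infDist_le_of_infDist_le (geo : GeodesicSpace' X) (hyp : RipsHyperbolic X δ)
    {a b a' b' x : X} {s s' : Set X} {R : ℝ} (hs : IsGeodesicSegment s a b)
    (hs' : IsGeodesicSegment s' a' b') (hx : infDist x s ≤ R) :
    infDist x s' ≤ R + (2 * δ + dist a a' + dist b b') := by
  linarith [infDist_le_infDist_add_of_forall_infDist_le x hs.nonempty
    fun p hp => hyp.infDist_le_of_mem geo hs hs' hp]

end RipsHyperbolic

theorem dist_le_of_forall_infDist_le {a b c x y : X} {s₁ s₂ s₃ : Set X} {R : ℝ}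
    (h₁ : IsGeodesicSegment s₁ a b) (h₂ : IsGeodesicSegment s₂ b c)
    (h₃ : IsGeodesicSegment s₃ a c)
    (hx₁ : infDist x s₁ ≤ R) (hx₂ : infDist x s₂ ≤ R) (hx₃ : infDist x s₃ ≤ R)
    (hy₁ : infDist y s₁ ≤ R) (hy₂ : infDist y s₂ ≤ R) (hy₃ : infDist y s₃ ≤ R) :
    dist x y ≤ 7 * R := by
  -- `2 dist x a` and `2 dist y a` both lie in `[g - 2R, g + 4R]`, `g = ab + ac - bc`.
  have hxya : |dist x a - dist y a| ≤ 3 * R := by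
    rw [abs_le]
    constructor <;> linarith [h₁.dist_add_dist_le hx₁, h₂.dist_add_dist_le hx₂,
      h₃.dist_add_dist_le hx₃, h₁.dist_add_dist_le hy₁, h₂.dist_add_dist_le hy₂,
      h₃.dist_add_dist_le hy₃, dist_triangle_left a b x, dist_triangle_left b c x,
      dist_triangle_left a c x, dist_triangle_left a b y, dist_triangle_left b c y,
      dist_triangle_left a c y]
  obtain ⟨p, hp, hxp⟩ := h₁.exists_mem_dist_le hx₁
  obtain ⟨q, hq, hyq⟩ := h₁.exists_mem_dist_le hy₁
  have hpq : dist p q ≤ 5 * R := by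
    rw [h₁.dist_eq_abs_sub hp hq]
    have hpx := abs_dist_sub_le p x a
    have hqy := abs_dist_sub_le q y a
    rw [abs_le] at hxya hpx hqy ⊢
    rw [dist_comm] at hxp hyq
    constructor <;> linarith
  calc dist x y ≤ dist x p + dist p q + dist q y := dist_triangle4 x p q y
    _ ≤ 7 * R := by linarith [dist_comm q y]

theorem centroidSet_nonempty {δ ρ : ℝ} (geo : GeodesicSpace' X) (hyp : RipsHyperbolic X δ)
    (hρ : δ ≤ ρ) (a b c : X) : (centroidSet ρ a b c).Nonempty := by
  obtain ⟨s₁, hs₁⟩ := geo a b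
  obtain ⟨s₂, hs₂⟩ := geo b c
  obtain ⟨s₃, hs₃⟩ := geo a c
  have hcont : ContinuousOn (fun x => infDist x s₂ - infDist x s₃) s₁ :=
    ((continuous_infDist_pt s₂).sub (continuous_infDist_pt s₃)).continuousOn
  have hsign : (0 : ℝ) ∈ Icc (infDist b s₂ - infDist b s₃) (infDist a s₂ - infDist a s₃) := by
    rw [infDist_zero_of_mem hs₂.left_mem, infDist_zero_of_mem hs₃.left_mem]
    exact ⟨by linarith [infDist_nonneg (x := b) (s := s₃)],
      by linarith [infDist_nonneg (x := a) (s := s₂)]⟩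
  obtain ⟨x, hx, hequi⟩ :=
    hs₁.isPreconnected.intermediate_value hs₁.right_mem hs₁.left_mem hcont hsign
  have heq : infDist x s₂ = infDist x s₃ := sub_eq_zero.mp hequi
  have hthin := (hyp a b c s₁ s₂ s₃ hs₁ hs₂ hs₃).1 x hx
  rw [infDist_union_of_nonempty x hs₂.nonempty hs₃.nonempty, heq, min_self] at hthin
  refine ⟨x, s₁, s₂, s₃, hs₁, hs₂, hs₃, ?_, by linarith, by linarith⟩
  rw [infDist_zero_of_mem hx]
  linarith [infDist_nonneg (x := x) (s := s₃)]

theorem IsCentroid.dist_le {δ ρ ε : ℝ} (geo : GeodesicSpace' X) (hyp : RipsHyperbolic X δ)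
    (hδ : 0 ≤ δ) {a b c a' b' c' x y : X} (hx : IsCentroid ρ a b c x)
    (hy : IsCentroid ρ a' b' c' y) (ha : dist a a' ≤ ε) (hb : dist b b' ≤ ε)
    (hc : dist c c' ≤ ε) : dist x y ≤ 7 * (ρ + 2 * δ + 2 * ε) := by
  obtain ⟨s₁, s₂, s₃, hs₁, hs₂, hs₃, hx₁, hx₂, hx₃⟩ := hx
  obtain ⟨t₁, t₂, t₃, ht₁, ht₂, ht₃, hy₁, hy₂, hy₃⟩ := hy
  have hε : 0 ≤ ε := dist_nonneg.trans ha
  refine dist_le_of_forall_infDist_le ht₁ ht₂ ht₃ ?_ ?_ ?_ ?_ ?_ ?_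
  · linarith [hyp.infDist_le_of_infDist_le geo hs₁ ht₁ hx₁]
  · linarith [hyp.infDist_le_of_infDist_le geo hs₂ ht₂ hx₂]
  · linarith [hyp.infDist_le_of_infDist_le geo hs₃ ht₃ hx₃]
  all_goals linarith

theorem centroid_map_coarse_lipschitz_general (δ : ℝ) :
    ∃ δ₀ : ℝ, 0 ≤ δ₀ ∧
      ∀ ρ : ℝ, δ₀ ≤ ρ →
        ∃ L : ℝ, 0 ≤ L ∧
          ∀ (X : Type) [MetricSpace X], GeodesicSpace' X → RipsHyperbolic X δ →
            ∀ a₁ a₂ a₃ a₁' a₂' a₃' : X,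
              dist a₁ a₁' ≤ 1 → dist a₂ a₂' ≤ 1 → dist a₃ a₃' ≤ 1 →
              (centroidSet ρ a₁ a₂ a₃).Nonempty ∧
              Metric.hausdorffDist (centroidSet ρ a₁ a₂ a₃) (centroidSet ρ a₁' a₂' a₃') ≤ L := by
  refine ⟨max δ 0, le_max_right δ 0, fun ρ hρ =>
    ⟨7 * (ρ + 2 * max δ 0 + 2 * 1), by linarith [le_max_right δ 0], ?_⟩⟩
  intro X _ geo hyp a₁ a₂ a₃ a₁' a₂' a₃' h₁ h₂ h₃
  have hyp₀ : RipsHyperbolic X (max δ 0) := hyp.mono (le_max_left δ 0)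
  have hne := centroidSet_nonempty geo hyp₀ hρ a₁ a₂ a₃
  refine ⟨hne, hausdorffDist_le_of_forall_dist_le hne
    (centroidSet_nonempty geo hyp₀ hρ a₁' a₂' a₃') fun x hx y hy => ?_⟩
  exact IsCentroid.dist_le geo hyp₀ (le_max_right δ 0) hx hy h₁ h₂ h₃

/-- The centroid-set map on triples is coarse-Lipschitz (with uniform constant `L`) with
respect to the Hausdorff metric: moving each vertex a distance at most 1 moves the
(nonempty) set of ρ-centroids a Hausdorff distance at most `L`. -/
theorem centroid_map_coarse_lipschitz (δ : ℝ) (hδ : 0 ≤ δ) :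
    ∃ δ₀ : ℝ, 0 ≤ δ₀ ∧
      ∀ ρ : ℝ, δ₀ ≤ ρ →
        ∃ L : ℝ, 0 ≤ L ∧
          ∀ (X : Type) [MetricSpace X], GeodesicSpace' X → RipsHyperbolic X δ →
            ∀ a₁ a₂ a₃ a₁' a₂' a₃' : X,
              dist a₁ a₁' ≤ 1 → dist a₂ a₂' ≤ 1 → dist a₃ a₃' ≤ 1 →
              (centroidSet ρ a₁ a₂ a₃).Nonempty ∧
              Metric.hausdorffDist (centroidSet ρ a₁ a₂ a₃) (centroidSet ρ a₁' a₂' a₃') ≤ L :=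
  centroid_map_coarse_lipschitz_general δ
end

section
/- Let (Γᵢ)_{i∈I} be a finite family of finite subsets of a metric space in which every ball of radius b₂ contains at most N points, and let Σ be a finite set such that every μ ∈ Σ lies within distance b₂ of some Γ_{γ(μ)}. Suppose each Γᵢ satisfies #Γᵢ ≤ b₁·(diam Γᵢ)^n for a fixed n ≥ 1, and Σ_{i∈I} diam Γᵢ ≤ b₃·D. Then #Σ ≤ c·D^n, where c depends only on b₁, b₂, b₃, N, and n. -/
/-!
Every point of `S` lies in a `b₂`-ball centred in `⋃ i, Γ i`, so
`#S ≤ N · #⋃ Γᵢ ≤ N b₁ ∑ (diam Γᵢ)ⁿ ≤ N b₁ (∑ diam Γᵢ)ⁿ ≤ N b₁ b₃ⁿ Dⁿ`;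
the third step is superadditivity of `x ↦ xⁿ` on `[0, ∞)` for `n ≥ 1`.
-/

open Finset in
theorem Finset.sum_pow_le_pow_sum {ι R : Type*} [Semiring R] [PartialOrder R]
    [IsOrderedRing R] {s : Finset ι} {f : ι → R} (hf : ∀ i ∈ s, 0 ≤ f i) {n : ℕ} (hn : n ≠ 0) :
    ∑ i ∈ s, f i ^ n ≤ (∑ i ∈ s, f i) ^ n := by
  classical
  induction s using Finset.induction_on with
  | empty => simp [zero_pow hn]
  | insert a s ha ih =>
    rw [sum_insert ha, sum_insert ha]
    have hfs : ∀ i ∈ s, 0 ≤ f i := fun i hi => hf i (mem_insert_of_mem hi)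
    calc f a ^ n + ∑ i ∈ s, f i ^ n ≤ f a ^ n + (∑ i ∈ s, f i) ^ n := by gcongr; exact ih hfs
      _ ≤ (f a + ∑ i ∈ s, f i) ^ n :=
        pow_add_pow_le (hf a (mem_insert_self a s)) (sum_nonneg hfs) hn

open Metric in
theorem Set.ncard_le_mul_ncard_of_forall_exists_dist_le {X : Type*} [PseudoMetricSpace X]
    {S T : Set X} {r : ℝ} {N : ℕ} (hT : T.Finite)
    (hball : ∀ p ∈ T, (closedBall p r).Finite ∧ (closedBall p r).ncard ≤ N)
    (hS : ∀ x ∈ S, ∃ p ∈ T, dist x p ≤ r) :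
    S.ncard ≤ N * T.ncard := by
  have hsub : S ⊆ ⋃ p ∈ hT.toFinset, closedBall p r := fun x hx => by
    obtain ⟨p, hp, hxp⟩ := hS x hx
    exact Set.mem_biUnion (hT.mem_toFinset.2 hp) (mem_closedBall.2 hxp)
  have hfin : (⋃ p ∈ hT.toFinset, closedBall p r).Finite :=
    hT.toFinset.finite_toSet.biUnion fun p hp => (hball p (hT.mem_toFinset.1 hp)).1
  calc S.ncard ≤ (⋃ p ∈ hT.toFinset, closedBall p r).ncard := Set.ncard_le_ncard hsub hfin
    _ ≤ ∑ p ∈ hT.toFinset, (closedBall p r).ncard := hT.toFinset.set_ncard_biUnion_le _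
    _ ≤ hT.toFinset.card * N :=
      Finset.sum_le_card_nsmul _ _ _ fun p hp => (hball p (hT.mem_toFinset.1 hp)).2
    _ = N * T.ncard := by rw [Set.ncard_eq_toFinset_card T hT, mul_comm]

theorem covering_count_bound_general (b₁ b₂ b₃ : ℝ) (hb₁ : 0 ≤ b₁) (hb₃ : 0 ≤ b₃)
    (N n : ℕ) (hn : 1 ≤ n) :
    ∃ c : ℝ, 0 ≤ c ∧
      ∀ (X : Type) [MetricSpace X] (I : Type) [Fintype I]
        (Γ : I → Set X) (S : Set X) (γ : X → I) (D : ℝ), 0 ≤ D →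
        (∀ p : X, (Metric.closedBall p b₂).Finite ∧ (Metric.closedBall p b₂).ncard ≤ N) →
        S.Finite →
        (∀ μ ∈ S, ∃ p ∈ Γ (γ μ), dist μ p ≤ b₂) →
        (∀ i : I, (Γ i).Finite ∧ ((Γ i).ncard : ℝ) ≤ b₁ * Metric.diam (Γ i) ^ n) →
        (∑ i : I, Metric.diam (Γ i)) ≤ b₃ * D →
        (S.ncard : ℝ) ≤ c * D ^ n := by
  refine ⟨N * b₁ * b₃ ^ n, by positivity, ?_⟩
  intro X _ I _ Γ S γ D _ hball _ hcov hΓ hsum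
  have hS : S.ncard ≤ N * (⋃ i, Γ i).ncard := by
    refine Set.ncard_le_mul_ncard_of_forall_exists_dist_le (Set.finite_iUnion fun i => (hΓ i).1)
      (fun p _ => hball p) fun μ hμ => ?_
    obtain ⟨p, hp, hμp⟩ := hcov μ hμ
    exact ⟨p, Set.mem_iUnion_of_mem _ hp, hμp⟩
  have hdiam : ∀ i ∈ Finset.univ, 0 ≤ Metric.diam (Γ i) := fun i _ => Metric.diam_nonneg
  have hunion : ((⋃ i, Γ i).ncard : ℝ) ≤ b₁ * (b₃ * D) ^ n :=
    calc ((⋃ i, Γ i).ncard : ℝ) ≤ ∑ i, ((Γ i).ncard : ℝ) := by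
          exact_mod_cast Set.ncard_iUnion_le_of_fintype Γ
      _ ≤ ∑ i, b₁ * Metric.diam (Γ i) ^ n := Finset.sum_le_sum fun i _ => (hΓ i).2
      _ ≤ b₁ * (∑ i, Metric.diam (Γ i)) ^ n := by
          rw [← Finset.mul_sum]
          gcongr
          exact Finset.sum_pow_le_pow_sum hdiam (by omega)
      _ ≤ b₁ * (b₃ * D) ^ n := by gcongr
  calc (S.ncard : ℝ) ≤ N * (⋃ i, Γ i).ncard := by exact_mod_cast hS
    _ ≤ N * (b₁ * (b₃ * D) ^ n) := by gcongr
    _ = N * b₁ * b₃ ^ n * D ^ n := by ring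

/-- Covering/counting step: if a finite set `S` is b₂-coarsely covered by a finite family of
finite sets `Γ i`, each satisfying a polynomial cardinality bound in its diameter, the
diameters sum to at most `b₃·D`, and every b₂-ball of the ambient space has at most `N`
points, then `#S ≤ c·Dⁿ` with `c` depending only on `b₁, b₂, b₃, N, n`. -/
theorem covering_count_bound (b₁ b₂ b₃ : ℝ) (hb₁ : 0 ≤ b₁) (hb₂ : 0 < b₂) (hb₃ : 0 ≤ b₃)
    (N n : ℕ) (hn : 1 ≤ n) :
    ∃ c : ℝ, 0 ≤ c ∧
      ∀ (X : Type) [MetricSpace X] (I : Type) [Fintype I]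
        (Γ : I → Set X) (S : Set X) (γ : X → I) (D : ℝ), 0 ≤ D →
        (∀ p : X, (Metric.closedBall p b₂).Finite ∧ (Metric.closedBall p b₂).ncard ≤ N) →
        S.Finite →
        (∀ μ ∈ S, ∃ p ∈ Γ (γ μ), dist μ p ≤ b₂) →
        (∀ i : I, (Γ i).Finite ∧ ((Γ i).ncard : ℝ) ≤ b₁ * Metric.diam (Γ i) ^ n) →
        (∑ i : I, Metric.diam (Γ i)) ≤ b₃ * D →
        (S.ncard : ℝ) ≤ c * D ^ n :=
  covering_count_bound_general b₁ b₂ b₃ hb₁ hb₃ N n hn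
end
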